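/- There exists a constant C > 0 such that for all integers m, n with 2 ≤ m ≤ n, every configuration A of the m × n Torus Puzzle in which every column is body-full, and every finite set 𝒞 of column indices with |𝒞| · (m − 1) ≤ n, there is a finite sequence of at most C · (n + |𝒞| · m) · ⌈log₂ m⌉ unit rotations whose application to A produces a configuration A' such that every column with index in 𝒞 is body-sorted in A', and for every column index j ∉ 𝒞 and every row index i with 1 ≤ i ≤ m − 1 one has A'(i, j) = A(i, j). -/

import Mathlib

/- Unit rightward rotation of row i of the m x n Torus Puzzle. -/
def rowRot (m n : ℕ) (i : Fin m) : Equiv.Perm (Fin m × Fin n) where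
  toFun p := if p.1 = i then (i, finRotate n p.2) else p
  invFun p := if p.1 = i then (i, (finRotate n).symm p.2) else p
  left_inv := by rintro ⟨a, b⟩; by_cases h : a = i <;> simp only [h, ↓reduceIte, if_true, if_false, Equiv.symm_apply_apply, Equiv.apply_symm_apply]
  right_inv := by rintro ⟨a, b⟩; by_cases h : a = i <;> simp only [h, ↓reduceIte, if_true, if_false, Equiv.symm_apply_apply, Equiv.apply_symm_apply]

/- Unit downward rotation of column j of the m x n Torus Puzzle. -/
def colRot (m n : ℕ) (j : Fin n) : Equiv.Perm (Fin m × Fin n) where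
  toFun p := if p.2 = j then (finRotate m p.1, j) else p
  invFun p := if p.2 = j then ((finRotate m).symm p.1, j) else p
  left_inv := by rintro ⟨a, b⟩; by_cases h : b = j <;> simp only [h, ↓reduceIte, if_true, if_false, Equiv.symm_apply_apply, Equiv.apply_symm_apply]
  right_inv := by rintro ⟨a, b⟩; by_cases h : b = j <;> simp only [h, ↓reduceIte, if_true, if_false, Equiv.symm_apply_apply, Equiv.apply_symm_apply]

/- The set S(m,n) of the m + n unit rotations. -/
def unitRotations (m n : ℕ) : Set (Equiv.Perm (Fin m × Fin n)) :=
  Set.range (rowRot m n) ∪ Set.range (colRot m n)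

/- Applying a unit rotation g to a configuration A yields A ∘ g⁻¹. -/
def applyRot {m n : ℕ} (A : (Fin m × Fin n) ≃ Fin (m * n))
    (g : Equiv.Perm (Fin m × Fin n)) : (Fin m × Fin n) ≃ Fin (m * n) :=
  g.symm.trans A

/- Applying a finite sequence of rotations, one after another (left to right). -/
def applySeq {m n : ℕ} (A : (Fin m × Fin n) ≃ Fin (m * n))
    (L : List (Equiv.Perm (Fin m × Fin n))) : (Fin m × Fin n) ≃ Fin (m * n) :=
  L.foldl applyRot A

/- Column j is near-full: every element in the body of column j has target column j. -/
def NearFull {m n : ℕ} (A : (Fin m × Fin n) ≃ Fin (m * n)) (j : Fin n) : Prop :=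
  ∀ i : Fin m, 1 ≤ (i : ℕ) → (A (i, j) : ℕ) % n = (j : ℕ)

/- The body of column j contains exactly the elements with target column j and target row ≥ 1. -/
def BodyOfColumnIsFull {m n : ℕ} (A : (Fin m × Fin n) ≃ Fin (m * n)) (j : Fin n) : Prop :=
  ∀ v : Fin (m * n),
    (∃ i : Fin m, 1 ≤ (i : ℕ) ∧ A (i, j) = v) ↔ ((v : ℕ) % n = (j : ℕ) ∧ 1 ≤ (v : ℕ) / n)

/- Column j is body-sorted: every element of the body of column j is in its target position. -/
def BodySorted {m n : ℕ} (A : (Fin m × Fin n) ≃ Fin (m * n)) (j : Fin n) : Prop :=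
  ∀ i : Fin m, 1 ≤ (i : ℕ) → (A (i, j) : ℕ) = (i : ℕ) * n + (j : ℕ)

/-!
Radix sort by target row `⌊v / n⌋`, least significant bit first: after `⌈log₂ m⌉` stable
partitions by one bit the bodies of the columns in `𝒞` are sorted by target row, and a body-full
column sorted by target row is body-sorted.

A pass partitions all columns of `𝒞` at once in `6n` ticks, using row 0 as a conveyor belt that
moves one step per tick. Each column of `𝒞` has `m - 1` belt slots of its own (this is where
`|𝒞|(m - 1) ≤ n` is used). The column first rotates its body item by item onto its slots, then
drops each item back when its slot comes round again: after `2n` ticks for bit 1 and `4n` ticks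
for bit 0. Every drop pushes the items dropped before it one row down, so the body comes back
stably partitioned, bit 0 above bit 1. A pass costs `6n` row rotations and `2(m - 1)` column
rotations per column of `𝒞`.
-/

namespace TorusPuzzle

open Finset Fin.CommRing

section WordPerm

variable {α : Type*}

def wordPerm (L : List (Equiv.Perm α)) : Equiv.Perm α := L.reverse.prod

@[simp] lemma wordPerm_singleton (g : Equiv.Perm α) : wordPerm [g] = g := by simp [wordPerm]

lemma wordPerm_append (L₁ L₂ : List (Equiv.Perm α)) :
    wordPerm (L₁ ++ L₂) = wordPerm L₂ * wordPerm L₁ := by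
  simp [wordPerm]

lemma applySeq_eq {m n : ℕ} (A : (Fin m × Fin n) ≃ Fin (m * n))
    (L : List (Equiv.Perm (Fin m × Fin n))) : applySeq A L = (wordPerm L).symm.trans A := by
  induction L generalizing A with
  | nil => rfl
  | cons g L ih =>
    rw [applySeq, List.foldl_cons, ← applySeq, ih, applyRot, ← List.singleton_append,
      wordPerm_append, wordPerm_singleton]
    rfl

def runPerm (W : ℕ → List (Equiv.Perm α)) (a b : ℕ) : Equiv.Perm α :=
  wordPerm ((List.range' a (b - a)).flatMap W)

lemma runPerm_trans (W : ℕ → List (Equiv.Perm α)) {a b c : ℕ} (hab : a ≤ b) (hbc : b ≤ c) :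
    runPerm W a c = runPerm W b c * runPerm W a b := by
  obtain ⟨k, rfl⟩ := Nat.exists_eq_add_of_le hab
  obtain ⟨l, rfl⟩ := Nat.exists_eq_add_of_le hbc
  simp only [runPerm, Nat.add_sub_cancel_left, show a + k + l - a = k + l by omega]
  rw [← wordPerm_append, ← List.flatMap_append, List.range'_append_1]

lemma runPerm_self_succ (W : ℕ → List (Equiv.Perm α)) (a : ℕ) :
    runPerm W a (a + 1) = wordPerm (W a) := by
  simp [runPerm]

lemma runPerm_apply_of_step (W : ℕ → List (Equiv.Perm α)) (f : ℕ → α) {a b : ℕ} (hab : a ≤ b)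
    (hstep : ∀ t, a ≤ t → t < b → wordPerm (W t) (f t) = f (t + 1)) :
    runPerm W a b (f a) = f b := by
  induction b, hab using Nat.le_induction with
  | base => simp [runPerm, wordPerm]
  | succ b hab ih =>
    rw [runPerm_trans W hab b.le_succ, Equiv.Perm.mul_apply,
      ih fun t h₁ h₂ => hstep t h₁ (by omega), runPerm_self_succ, hstep b hab b.lt_succ_self]

end WordPerm

section StableRank

variable {β : Type*} [LinearOrder β] (κ : ℕ → β) {m : ℕ}

def stableRank (κ : ℕ → β) (m i : ℕ) : ℕ := #{x ∈ Ico 1 m | toLex (κ x, x) < toLex (κ i, i)}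

lemma stableRank_lt_stableRank {x i : ℕ} (hx : x ∈ Ico 1 m)
    (h : toLex (κ x, x) < toLex (κ i, i)) : stableRank κ m x < stableRank κ m i := by
  refine card_lt_card ((ssubset_iff_of_subset fun y hy => ?_).2 ⟨x, ?_, ?_⟩)
  · rw [mem_filter] at hy ⊢
    exact ⟨hy.1, hy.2.trans h⟩
  · exact mem_filter.2 ⟨hx, h⟩
  · simp

lemma stableRank_lt {i : ℕ} (hi : i ∈ Ico 1 m) : stableRank κ m i < m - 1 := by
  have hsub : {x ∈ Ico 1 m | toLex (κ x, x) < toLex (κ i, i)} ⊆ (Ico 1 m).erase i := by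
    intro x hx
    rw [mem_filter] at hx
    exact mem_erase.2 ⟨by rintro rfl; exact lt_irrefl _ hx.2, hx.1⟩
  have := card_le_card hsub
  rw [card_erase_of_mem hi, Nat.card_Ico] at this
  rw [mem_Ico] at hi
  exact lt_of_le_of_lt this (by omega)

lemma stableRank_injOn : Set.InjOn (stableRank κ m) (Ico 1 m) := by
  intro x hx i hi h
  by_contra hne
  have hlex : toLex (κ x, x) ≠ toLex (κ i, i) := fun e => hne (congrArg Prod.snd e)
  rcases hlex.lt_or_gt with hlt | hlt
  · exact (stableRank_lt_stableRank κ hx hlt).ne h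
  · exact (stableRank_lt_stableRank κ hi hlt).ne' h

lemma exists_stableRank_eq {r : ℕ} (hr : r < m - 1) : ∃ x ∈ Ico 1 m, stableRank κ m x = r := by
  obtain ⟨x, hx, rfl⟩ := surj_on_of_inj_on_of_card_le (s := Ico 1 m) (t := range (m - 1))
    (fun x _ => stableRank κ m x) (fun x hx => mem_range.2 (stableRank_lt κ hx))
    (fun _ _ hx hi h => stableRank_injOn κ hx hi h) (by simp) r (mem_range.2 hr)
  exact ⟨x, hx, rfl⟩

end StableRank

lemma mod_two_pow_succ_le_of_toLex_le {a b R : ℕ}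
    (h : toLex (a.testBit R, a % 2 ^ R) ≤ toLex (b.testBit R, b % 2 ^ R)) :
    a % 2 ^ (R + 1) ≤ b % 2 ^ (R + 1) := by
  rw [Nat.mod_pow_succ, Nat.mod_pow_succ, ← Nat.toNat_testBit, ← Nat.toNat_testBit]
  have hlow := Nat.mod_lt a (Nat.two_pow_pos R)
  rw [Prod.Lex.toLex_le_toLex] at h
  cases ha : a.testBit R <;> cases hb : b.testBit R <;> simp +decide [ha, hb] at h ⊢ <;> omega

section Schedule

variable {n : ℕ}

def rankIn (C : Finset (Fin n)) (j : Fin n) : ℕ := #{x ∈ C | x < j}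

/- Row 0 serves as a conveyor belt: at tick `t` the cell `(0, c)` carries belt slot `c - t`.
Column `j ∈ C` owns the `m - 1` slots from `rankIn C j * (m - 1)` on, disjoint from those of the
other columns as long as `#C * (m - 1) ≤ n`. The item of body row `x` is lifted onto slot
`beltSlot m C j x`: its lift time is `≡ j - beltSlot m C j x (mod n)`, and the lift times of one
column are consecutive. -/
def beltSlot (m : ℕ) (C : Finset (Fin n)) (j : Fin n) (x : ℕ) : ℕ :=
  rankIn C j * (m - 1) + (x - 1)

def sweepStart (m : ℕ) (C : Finset (Fin n)) (j : Fin n) : ℕ :=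
  (j + (n - beltSlot m C j (m - 1))) % n

def liftTime (m : ℕ) (C : Finset (Fin n)) (j : Fin n) (x : ℕ) : ℕ :=
  sweepStart m C j + (m - 1 - x)

/- Items with bit `false` ride longer, so they are dropped back last and end up on top. -/
def rideTime (μ : Fin n → ℕ → Bool) (j : Fin n) (x : ℕ) : ℕ :=
  if μ j x then 2 * n else 4 * n

def dropTime (m : ℕ) (C : Finset (Fin n)) (μ : Fin n → ℕ → Bool) (j : Fin n) (x : ℕ) : ℕ :=
  liftTime m C j x + rideTime μ j x

def fireTimes (m : ℕ) (C : Finset (Fin n)) (μ : Fin n → ℕ → Bool) (j : Fin n) : Finset ℕ :=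
  (Ico 1 m).image (liftTime m C j) ∪ (Ico 1 m).image (dropTime m C μ j)

def firingCols (m : ℕ) (C : Finset (Fin n)) (μ : Fin n → ℕ → Bool) (t : ℕ) : Finset (Fin n) :=
  {j ∈ C | t ∈ fireTimes m C μ j}

def fireCount (m : ℕ) (C : Finset (Fin n)) (μ : Fin n → ℕ → Bool) (j : Fin n) (a b : ℕ) : ℕ :=
  #{t ∈ Ico a b | j ∈ firingCols m C μ t}

noncomputable def tickWord (m : ℕ) [NeZero m] (C : Finset (Fin n)) (μ : Fin n → ℕ → Bool)
    (t : ℕ) : List (Equiv.Perm (Fin m × Fin n)) :=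
  (firingCols m C μ t).toList.map (colRot m n) ++ [rowRot m n 0]

noncomputable def passWord (m : ℕ) [NeZero m] (C : Finset (Fin n)) (μ : Fin n → ℕ → Bool) :
    List (Equiv.Perm (Fin m × Fin n)) :=
  (List.range (6 * n)).flatMap (tickWord m C μ)

variable {m : ℕ} {C : Finset (Fin n)} {μ : Fin n → ℕ → Bool} {j : Fin n}

lemma rankIn_strictMonoOn : StrictMonoOn (rankIn C) C := by
  intro a ha b _ hab
  refine card_lt_card ((ssubset_iff_of_subset fun y hy => ?_).2 ⟨a, ?_, ?_⟩)
  · rw [mem_filter] at hy ⊢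
    exact ⟨hy.1, hy.2.trans hab⟩
  · exact mem_filter.2 ⟨ha, hab⟩
  · simp

lemma rankIn_lt_card (hj : j ∈ C) : rankIn C j < #C :=
  card_lt_card (filter_ssubset.2 ⟨j, hj, lt_irrefl j⟩)

lemma beltSlot_lt (hC : #C * (m - 1) ≤ n) (hj : j ∈ C) {x : ℕ} (hx : x ∈ Ico 1 m) :
    beltSlot m C j x < n := by
  have h := Nat.mul_le_mul_right (m - 1) (rankIn_lt_card hj)
  rw [Nat.succ_mul] at h
  rw [mem_Ico] at hx
  unfold beltSlot
  omega

lemma eq_of_beltSlot_eq (hj : j ∈ C) {j' : Fin n} (hj' : j' ∈ C) {x x' : ℕ} (hx : x ∈ Ico 1 m)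
    (hx' : x' ∈ Ico 1 m) (h : beltSlot m C j x = beltSlot m C j' x') : j = j' ∧ x = x' := by
  have hdiv {k : Fin n} {y : ℕ} (hy : y ∈ Ico 1 m) : beltSlot m C k y / (m - 1) = rankIn C k := by
    rw [mem_Ico] at hy
    rw [beltSlot, Nat.mul_comm, Nat.mul_add_div (by omega), Nat.div_eq_of_lt (by omega),
      Nat.add_zero]
  have hrank : rankIn C j = rankIn C j' := by rw [← hdiv hx, ← hdiv hx', h]
  refine ⟨rankIn_strictMonoOn.injOn hj hj' hrank, ?_⟩
  rw [beltSlot, beltSlot, hrank] at h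
  rw [mem_Ico] at hx hx'
  omega

lemma natCast_liftTime [NeZero n] (hC : #C * (m - 1) ≤ n) (hj : j ∈ C) {x : ℕ}
    (hx : x ∈ Ico 1 m) : (liftTime m C j x : Fin n) = j - (beltSlot m C j x : Fin n) := by
  have hm : m - 1 ∈ Ico 1 m := by rw [mem_Ico] at hx ⊢; omega
  have hlast := beltSlot_lt hC hj hm
  have hsplit : beltSlot m C j (m - 1) = beltSlot m C j x + (m - 1 - x) := by
    rw [mem_Ico] at hx
    unfold beltSlot
    omega
  have hmod : (sweepStart m C j : Fin n) = ((j + (n - beltSlot m C j (m - 1)) : ℕ) : Fin n) :=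
    Fin.ext (by rw [sweepStart, Fin.val_natCast, Fin.val_natCast, Nat.mod_mod])
  rw [liftTime, Nat.cast_add, hmod, Nat.cast_add, Nat.cast_sub hlast.le, hsplit, Fin.natCast_self,
    Fin.cast_val_eq_self]
  push_cast
  ring

lemma natCast_rideTime [NeZero n] {x : ℕ} : (rideTime μ j x : Fin n) = 0 := by
  rw [Fin.natCast_eq_zero]
  unfold rideTime
  split <;> simp

lemma natCast_dropTime [NeZero n] (hC : #C * (m - 1) ≤ n) (hj : j ∈ C) {x : ℕ}
    (hx : x ∈ Ico 1 m) : (dropTime m C μ j x : Fin n) = j - (beltSlot m C j x : Fin n) := by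
  rw [dropTime, Nat.cast_add, natCast_rideTime, add_zero, natCast_liftTime hC hj hx]

lemma dropTime_lt_dropTime_iff (hmn : m ≤ n) {x i : ℕ} (hx : x ∈ Ico 1 m) (hi : i ∈ Ico 1 m) :
    dropTime m C μ j i < dropTime m C μ j x ↔ toLex (μ j x, x) < toLex (μ j i, i) := by
  rw [mem_Ico] at hx hi
  rw [Prod.Lex.toLex_lt_toLex]
  unfold dropTime liftTime rideTime
  cases μ j x <;> cases μ j i <;> simp +decide <;> omega

end Schedule

lemma natCast_ne_zero_of_lt {m k : ℕ} [NeZero m] (hk : 0 < k) (hkm : k < m) : (k : Fin m) ≠ 0 :=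
  fun h => absurd (Nat.le_of_dvd hk (Fin.natCast_eq_zero.1 h)) (by omega)

section Pass

variable {m n : ℕ} {C : Finset (Fin n)} {μ : Fin n → ℕ → Bool} {j : Fin n}

lemma mem_fireTimes {t : ℕ} :
    t ∈ fireTimes m C μ j ↔ ∃ x ∈ Ico 1 m, liftTime m C j x = t ∨ dropTime m C μ j x = t := by
  simp only [fireTimes, mem_union, mem_image, and_or_left, exists_or]

lemma mem_firingCols_iff (hj : j ∈ C) {t : ℕ} :
    j ∈ firingCols m C μ t ↔ ∃ x ∈ Ico 1 m, liftTime m C j x = t ∨ dropTime m C μ j x = t := by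
  rw [firingCols, mem_filter, mem_fireTimes, and_iff_right hj]

lemma card_fireTimes_le : #(fireTimes m C μ j) ≤ 2 * (m - 1) := by
  have h₁ := card_image_le (s := Ico 1 m) (f := liftTime m C j)
  have h₂ := card_image_le (s := Ico 1 m) (f := dropTime m C μ j)
  rw [Nat.card_Ico] at h₁ h₂
  exact (card_union_le _ _).trans (by omega)

lemma liftTime_lt_dropTime (hmn : m ≤ n) {x i : ℕ} (hx : x ∈ Ico 1 m) (hi : i ∈ Ico 1 m) :
    liftTime m C j x < dropTime m C μ j i := by
  rw [mem_Ico] at hx hi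
  unfold dropTime liftTime rideTime
  split <;> omega

lemma dropTime_lt [NeZero n] (hmn : m ≤ n) {x : ℕ} (hx : x ∈ Ico 1 m) :
    dropTime m C μ j x < 6 * n := by
  have := Nat.mod_lt (j + (n - beltSlot m C j (m - 1))) (NeZero.pos n)
  rw [mem_Ico] at hx
  unfold dropTime liftTime rideTime sweepStart
  split <;> omega

lemma dropTime_injOn (hmn : m ≤ n) : Set.InjOn (dropTime m C μ j) (Ico 1 m) := by
  intro x hx x' hx' h
  have h₁ := (dropTime_lt_dropTime_iff (C := C) (μ := μ) (j := j) hmn hx' hx).not.1 h.not_lt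
  have h₂ := (dropTime_lt_dropTime_iff (C := C) (μ := μ) (j := j) hmn hx hx').not.1 h.symm.not_lt
  have hkey : toLex (μ j x, x) = toLex (μ j x', x') := le_antisymm (not_lt.1 h₁) (not_lt.1 h₂)
  exact congrArg Prod.snd hkey

lemma passWord_mem_unitRotations [NeZero m] {g : Equiv.Perm (Fin m × Fin n)}
    (hg : g ∈ passWord m C μ) : g ∈ unitRotations m n := by
  simp only [passWord, tickWord, List.mem_flatMap, List.mem_append, List.mem_map,
    List.mem_singleton] at hg
  obtain ⟨t, -, ⟨j, -, rfl⟩ | rfl⟩ := hg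
  · exact Or.inr ⟨j, rfl⟩
  · exact Or.inl ⟨0, rfl⟩

lemma length_passWord [NeZero m] : (passWord m C μ).length ≤ 6 * n + #C * (2 * (m - 1)) := by
  have hlen : (passWord m C μ).length = ∑ t ∈ range (6 * n), (#(firingCols m C μ t) + 1) := by
    simp only [passWord, tickWord, List.length_flatMap, List.length_append, List.length_map,
      length_toList, List.length_singleton]
    rfl
  have hswap : ∑ t ∈ range (6 * n), #(firingCols m C μ t) =
      ∑ j ∈ C, #{t ∈ range (6 * n) | t ∈ fireTimes m C μ j} := by
    simp only [firingCols, card_filter]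
    exact sum_comm
  have hbound : ∑ j ∈ C, #{t ∈ range (6 * n) | t ∈ fireTimes m C μ j} ≤ #C * (2 * (m - 1)) :=
    (sum_le_card_nsmul _ _ _ fun j _ =>
      (card_le_card fun t ht => (mem_filter.1 ht).2).trans card_fireTimes_le).trans_eq
      (smul_eq_mul _ _)
  rw [hlen, sum_add_distrib, hswap, sum_const, card_range, smul_eq_mul, mul_one]
  omega

lemma wordPerm_map_colRot_apply {L : List (Fin n)} (hL : L.Nodup) (i : Fin m) (j : Fin n) :
    wordPerm (L.map (colRot m n)) (i, j) = if j ∈ L then (finRotate m i, j) else (i, j) := by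
  induction L generalizing i with
  | nil => simp [wordPerm]
  | cons a L ih =>
    rw [List.nodup_cons] at hL
    rw [List.map_cons, ← List.singleton_append, wordPerm_append, wordPerm_singleton,
      Equiv.Perm.mul_apply]
    by_cases hja : j = a
    · subst hja
      simp [colRot, ih hL.2, hL.1]
    · simp [colRot, ih hL.2, hja]

variable [NeZero m] {t : ℕ} {i : Fin m}

lemma wordPerm_passWord : wordPerm (passWord m C μ) = runPerm (tickWord m C μ) 0 (6 * n) := by
  simp [runPerm, passWord, List.range_eq_range']

lemma wordPerm_tickWord_apply :
    wordPerm (tickWord m C μ t) (i, j) =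
      rowRot m n 0 (if j ∈ firingCols m C μ t then (i + 1, j) else (i, j)) := by
  rw [tickWord, wordPerm_append, wordPerm_singleton, Equiv.Perm.mul_apply,
    wordPerm_map_colRot_apply (nodup_toList _)]
  simp only [mem_toList, finRotate_apply]

lemma wordPerm_tickWord_of_notMem (h : j ∉ firingCols m C μ t) (hi : i ≠ 0) :
    wordPerm (tickWord m C μ t) (i, j) = (i, j) := by
  simp [wordPerm_tickWord_apply, h, rowRot, hi]

lemma wordPerm_tickWord_of_mem (h : j ∈ firingCols m C μ t) (hi : i + 1 ≠ 0) :
    wordPerm (tickWord m C μ t) (i, j) = (i + 1, j) := by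
  simp [wordPerm_tickWord_apply, h, rowRot, hi]

lemma runPerm_tickWord_descend {a b r : ℕ} (hab : a ≤ b) (hr : 1 ≤ r)
    (hfit : r + fireCount m C μ j a b < m) :
    runPerm (tickWord m C μ) a b ((r : Fin m), j) =
      (((r + fireCount m C μ j a b : ℕ) : Fin m), j) := by
  have hsucc : ∀ t, a ≤ t → fireCount m C μ j a (t + 1) =
      fireCount m C μ j a t + if j ∈ firingCols m C μ t then 1 else 0 := by
    intro t ht
    rw [fireCount, fireCount, ← Nat.succ_eq_add_one, Nat.Ico_succ_right_eq_insert_Ico ht,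
      filter_insert]
    split_ifs
    · exact card_insert_of_notMem (by simp)
    · rfl
  have hmono : ∀ t ≤ b, fireCount m C μ j a t ≤ fireCount m C μ j a b := fun t ht =>
    card_le_card (filter_subset_filter _ (Ico_subset_Ico_right ht))
  have h := runPerm_apply_of_step (tickWord m C μ)
    (fun t => (((r + fireCount m C μ j a t : ℕ) : Fin m), j)) hab fun t hat htb => by
      have hle := hmono (t + 1) htb
      simp only [hsucc t hat] at hle ⊢
      split_ifs at hle ⊢ with hfire
      · rw [wordPerm_tickWord_of_mem hfire
          (by rw [← Nat.cast_succ]; exact natCast_ne_zero_of_lt (by omega) (by omega)),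
          ← Nat.cast_succ]
        rfl
      · exact wordPerm_tickWord_of_notMem hfire (natCast_ne_zero_of_lt (by omega) (by omega))
  simpa [fireCount] using h

variable [NeZero n]

lemma wordPerm_tickWord_zero_of_notMem (h : j ∉ firingCols m C μ t) :
    wordPerm (tickWord m C μ t) (0, j) = (0, j + 1) := by
  simp [wordPerm_tickWord_apply, h, rowRot, finRotate_apply]

lemma wordPerm_tickWord_of_mem_of_add_one_eq_zero (h : j ∈ firingCols m C μ t) (hi : i + 1 = 0) :
    wordPerm (tickWord m C μ t) (i, j) = (0, j + 1) := by
  simp [wordPerm_tickWord_apply, h, rowRot, hi, finRotate_apply]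

end Pass

section Trajectory

variable {m n : ℕ} {C : Finset (Fin n)} {μ : Fin n → ℕ → Bool} {j : Fin n} {i : ℕ}

lemma fireCount_zero_liftTime (hmn : m ≤ n) (hj : j ∈ C) (hi : i ∈ Ico 1 m) :
    fireCount m C μ j 0 (liftTime m C j i) = m - 1 - i := by
  have hset : {t ∈ Ico 0 (liftTime m C j i) | j ∈ firingCols m C μ t} =
      Ico (sweepStart m C j) (liftTime m C j i) := by
    ext t
    rw [mem_filter, mem_Ico, mem_Ico, mem_firingCols_iff hj]
    constructor
    · rintro ⟨⟨-, ht⟩, x, hx, rfl | rfl⟩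
      · exact ⟨Nat.le_add_right _ _, ht⟩
      · have := liftTime_lt_dropTime (C := C) (μ := μ) (j := j) hmn hi hx
        omega
    · rintro ⟨h₁, h₂⟩
      rw [mem_Ico] at hi
      refine ⟨⟨Nat.zero_le _, h₂⟩, m - 1 - (t - sweepStart m C j), ?_, Or.inl ?_⟩
      · rw [liftTime] at h₂
        rw [mem_Ico]
        omega
      · rw [liftTime] at h₂ ⊢
        omega
  rw [fireCount, hset, Nat.card_Ico, liftTime]
  omega

lemma notMem_firingCols_of_riding [NeZero n] (hC : #C * (m - 1) ≤ n) (hj : j ∈ C) (hi : i ∈ Ico 1 m)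
    {t : ℕ} (h₁ : liftTime m C j i < t) (h₂ : t < dropTime m C μ j i) :
    j + ((t - liftTime m C j i : ℕ) : Fin n) ∉ firingCols m C μ t := by
  set j' := j + ((t - liftTime m C j i : ℕ) : Fin n) with hj'
  intro hfire
  have hj'C : j' ∈ C := (mem_filter.1 hfire).1
  obtain ⟨x, hx, hxt⟩ := (mem_firingCols_iff hj'C).1 hfire
  have hbelt : (t : Fin n) = j' - (beltSlot m C j' x : Fin n) := by
    rcases hxt with h | h <;> rw [← h]
    · exact natCast_liftTime hC hj'C hx
    · exact natCast_dropTime hC hj'C hx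
  have hride : (t : Fin n) = j' - (beltSlot m C j i : Fin n) := by
    have ht : (t : Fin n) = (liftTime m C j i : Fin n) + ((t - liftTime m C j i : ℕ) : Fin n) := by
      rw [← Nat.cast_add, Nat.add_sub_of_le h₁.le]
    rw [ht, natCast_liftTime hC hj hi, hj']
    ring
  have hslot : beltSlot m C j' x = beltSlot m C j i := by
    have h := congrArg Fin.val (sub_right_injective (hbelt.symm.trans hride))
    rwa [Fin.val_cast_of_lt (beltSlot_lt hC hj'C hx), Fin.val_cast_of_lt (beltSlot_lt hC hj hi)]
      at h
  obtain ⟨hjj, hxi⟩ := eq_of_beltSlot_eq hj'C hj hx hi hslot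
  rw [hjj, hxi] at hxt
  omega

lemma fireCount_dropTime_succ [NeZero n] (hmn : m ≤ n) (hj : j ∈ C) (hi : i ∈ Ico 1 m) :
    fireCount m C μ j (dropTime m C μ j i + 1) (6 * n) = stableRank (μ j) m i := by
  have hset : {t ∈ Ico (dropTime m C μ j i + 1) (6 * n) | j ∈ firingCols m C μ t} =
      {x ∈ Ico 1 m | toLex (μ j x, x) < toLex (μ j i, i)}.image (dropTime m C μ j) := by
    ext t
    rw [mem_filter, mem_Ico, mem_firingCols_iff hj, mem_image]
    constructor
    · rintro ⟨⟨ht, -⟩, x, hx, rfl | rfl⟩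
      · have := liftTime_lt_dropTime (C := C) (μ := μ) (j := j) hmn hx hi
        omega
      · exact ⟨x, mem_filter.2 ⟨hx, (dropTime_lt_dropTime_iff hmn hx hi).1 ht⟩, rfl⟩
    · rintro ⟨x, hx, rfl⟩
      rw [mem_filter] at hx
      exact ⟨⟨(dropTime_lt_dropTime_iff hmn hx.1 hi).2 hx.2, dropTime_lt hmn hx.1⟩,
        x, hx.1, Or.inr rfl⟩
  rw [fireCount, hset, card_image_of_injOn, stableRank]
  exact (dropTime_injOn hmn).mono fun x hx => (mem_filter.1 hx).1

lemma runPerm_zero_liftTime [NeZero m] (hmn : m ≤ n) (hj : j ∈ C) (hi : i ∈ Ico 1 m) :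
    runPerm (tickWord m C μ) 0 (liftTime m C j i) ((i : Fin m), j) =
      (((m - 1 : ℕ) : Fin m), j) := by
  have hcount := fireCount_zero_liftTime (μ := μ) hmn hj hi
  rw [mem_Ico] at hi
  rw [runPerm_tickWord_descend (Nat.zero_le _) hi.1 (by omega), hcount,
    Nat.add_sub_of_le (by omega)]

lemma runPerm_ride [NeZero m] [NeZero n] (hmn : m ≤ n) (hC : #C * (m - 1) ≤ n) (hj : j ∈ C)
    (hi : i ∈ Ico 1 m) :
    runPerm (tickWord m C μ) (liftTime m C j i + 1) (dropTime m C μ j i) (0, j + 1) = (0, j) := by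
  have h := runPerm_apply_of_step (tickWord m C μ)
    (fun t => ((0 : Fin m), j + ((t - liftTime m C j i : ℕ) : Fin n)))
    (liftTime_lt_dropTime (C := C) (μ := μ) (j := j) hmn hi hi) fun t h₁ h₂ => by
      rw [wordPerm_tickWord_zero_of_notMem (notMem_firingCols_of_riding hC hj hi h₁ h₂),
        show t + 1 - liftTime m C j i = t - liftTime m C j i + 1 by omega, Nat.cast_succ, add_assoc]
  simpa [dropTime, natCast_rideTime] using h

end Trajectory

section PassAction

variable {m n : ℕ} {C : Finset (Fin n)} {μ : Fin n → ℕ → Bool} {j : Fin n} [NeZero m]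

lemma wordPerm_passWord_apply_of_notMem (hj : j ∉ C) {i : Fin m} (hi : i ≠ 0) :
    wordPerm (passWord m C μ) (i, j) = (i, j) := by
  rw [wordPerm_passWord]
  exact runPerm_apply_of_step _ (fun _ => (i, j)) (Nat.zero_le _) fun _ _ _ =>
    wordPerm_tickWord_of_notMem (fun h => hj (mem_filter.1 h).1) hi

variable [NeZero n]

lemma wordPerm_passWord_apply_of_mem (hmn : m ≤ n) (hC : #C * (m - 1) ≤ n) (hj : j ∈ C) {i : ℕ}
    (hi : i ∈ Ico 1 m) :
    wordPerm (passWord m C μ) ((i : Fin m), j) = (((stableRank (μ j) m i + 1 : ℕ) : Fin m), j) := by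
  have hm : 2 ≤ m := by rw [mem_Ico] at hi; omega
  have hlift := liftTime_lt_dropTime (C := C) (μ := μ) (j := j) hmn hi hi
  have hdrop := dropTime_lt (C := C) (μ := μ) (j := j) hmn hi
  have hfire_lift : j ∈ firingCols m C μ (liftTime m C j i) :=
    (mem_firingCols_iff hj).2 ⟨i, hi, Or.inl rfl⟩
  have hfire_drop : j ∈ firingCols m C μ (dropTime m C μ j i) :=
    (mem_firingCols_iff hj).2 ⟨i, hi, Or.inr rfl⟩
  have hwrap : ((m - 1 : ℕ) : Fin m) + 1 = 0 := by
    rw [← Nat.cast_add_one, Nat.sub_add_cancel (by omega), Fin.natCast_self]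
  have hone : (0 : Fin m) + 1 ≠ 0 := by
    rw [zero_add, ← Nat.cast_one]
    exact natCast_ne_zero_of_lt one_pos (by omega)
  rw [wordPerm_passWord, runPerm_trans _ (Nat.zero_le _) hdrop (b := dropTime m C μ j i + 1),
    runPerm_trans _ (Nat.zero_le _) (Nat.le_succ _) (b := dropTime m C μ j i),
    runPerm_trans _ (Nat.zero_le _) hlift (b := liftTime m C j i + 1),
    runPerm_trans _ (Nat.zero_le _) (Nat.le_succ _) (b := liftTime m C j i)]
  simp only [Equiv.Perm.mul_apply, runPerm_self_succ]
  have hcount := fireCount_dropTime_succ (μ := μ) hmn hj hi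
  have hrank := stableRank_lt (μ j) hi
  rw [runPerm_zero_liftTime hmn hj hi, wordPerm_tickWord_of_mem_of_add_one_eq_zero hfire_lift hwrap,
    runPerm_ride hmn hC hj hi, wordPerm_tickWord_of_mem hfire_drop hone, zero_add,
    show (1 : Fin m) = ((1 : ℕ) : Fin m) from Nat.cast_one.symm,
    runPerm_tickWord_descend (a := dropTime m C μ j i + 1) hdrop le_rfl (by omega), hcount,
    Nat.add_comm 1]

lemma exists_wordPerm_passWord_symm_apply (hmn : m ≤ n) (hC : #C * (m - 1) ≤ n) (hj : j ∈ C)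
    (i : Fin m) (hi : 1 ≤ (i : ℕ)) :
    ∃ x ∈ Ico 1 m, (wordPerm (passWord m C μ)).symm (i, j) = ((x : Fin m), j) ∧
      stableRank (μ j) m x + 1 = i := by
  obtain ⟨x, hx, hrank⟩ := exists_stableRank_eq (μ j) (m := m) (r := i - 1) (by omega)
  refine ⟨x, hx, (Equiv.symm_apply_eq _).2 ?_, by omega⟩
  rw [wordPerm_passWord_apply_of_mem hmn hC hj hx, hrank, Nat.sub_add_cancel hi,
    Fin.cast_val_eq_self]

end PassAction

section Radix

variable {m n : ℕ} {C : Finset (Fin n)} {A B : (Fin m × Fin n) ≃ Fin (m * n)} {R : ℕ}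

lemma applySeq_append (A : (Fin m × Fin n) ≃ Fin (m * n))
    (L₁ L₂ : List (Equiv.Perm (Fin m × Fin n))) :
    applySeq A (L₁ ++ L₂) = applySeq (applySeq A L₁) L₂ :=
  List.foldl_append

def bitsOf [NeZero m] (B : (Fin m × Fin n) ≃ Fin (m * n)) (R : ℕ) : Fin n → ℕ → Bool :=
  fun j x => ((B ((x : Fin m), j) : ℕ) / n).testBit R

structure RadixInvariant (A B : (Fin m × Fin n) ≃ Fin (m * n)) (C : Finset (Fin n)) (R : ℕ) :
    Prop where
  fixed : ∀ j ∉ C, ∀ i : Fin m, 1 ≤ (i : ℕ) → B (i, j) = A (i, j)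
  body : ∀ j ∈ C, ∀ i : Fin m, 1 ≤ (i : ℕ) → ∃ i' : Fin m, 1 ≤ (i' : ℕ) ∧ B (i, j) = A (i', j)
  sorted : ∀ j ∈ C, ∀ i i' : Fin m, 1 ≤ (i : ℕ) → i ≤ i' →
    (B (i, j) : ℕ) / n % 2 ^ R ≤ (B (i', j) : ℕ) / n % 2 ^ R

lemma RadixInvariant.refl : RadixInvariant A A C 0 where
  fixed _ _ _ _ := rfl
  body _ _ i hi := ⟨i, hi, rfl⟩
  sorted _ _ _ _ _ _ := by simp only [pow_zero, Nat.mod_one, le_refl]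

lemma RadixInvariant.pass [NeZero m] [NeZero n] (hmn : m ≤ n) (hC : #C * (m - 1) ≤ n)
    (h : RadixInvariant A B C R) :
    RadixInvariant A (applySeq B (passWord m C (bitsOf B R))) C (R + 1) := by
  set σ := wordPerm (passWord m C (bitsOf B R))
  have happ : ∀ p, applySeq B (passWord m C (bitsOf B R)) p = B (σ.symm p) := fun p => by
    rw [applySeq_eq]
    rfl
  have hval {x : ℕ} (hx : x ∈ Ico 1 m) : ((x : Fin m) : ℕ) = x :=
    Fin.val_cast_of_lt (mem_Ico.1 hx).2
  refine ⟨fun j hj i hi => ?_, fun j hj i hi => ?_, fun j hj i i' hi hii' => ?_⟩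
  · have hi0 : i ≠ 0 := fun h0 => by simp [h0] at hi
    rw [happ, (Equiv.symm_apply_eq _).2 (wordPerm_passWord_apply_of_notMem hj hi0).symm]
    exact h.fixed j hj i hi
  · obtain ⟨x, hx, hσ, -⟩ := exists_wordPerm_passWord_symm_apply hmn hC hj i hi
    rw [happ, hσ]
    exact h.body j hj _ ((hval hx).symm ▸ (mem_Ico.1 hx).1)
  · obtain ⟨x, hx, hσ, hrank⟩ := exists_wordPerm_passWord_symm_apply hmn hC hj i hi
    obtain ⟨x', hx', hσ', hrank'⟩ :=
      exists_wordPerm_passWord_symm_apply hmn hC hj i' (hi.trans hii')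
    rw [happ, happ, hσ, hσ']
    have hlex : toLex (bitsOf B R j x, x) ≤ toLex (bitsOf B R j x', x') := not_lt.1 fun hlt => by
      have := stableRank_lt_stableRank (bitsOf B R j) hx' hlt
      have : (i : ℕ) ≤ i' := hii'
      omega
    apply mod_two_pow_succ_le_of_toLex_le
    rw [Prod.Lex.toLex_le_toLex] at hlex ⊢
    refine hlex.imp_right fun ⟨hbit, hxx'⟩ => ⟨hbit, h.sorted j hj _ _ ?_ ?_⟩
    · rw [hval hx]
      exact (mem_Ico.1 hx).1
    · rw [Fin.le_iff_val_le_val, hval hx, hval hx']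
      exact hxx'

lemma exists_radixWord [NeZero m] [NeZero n] (hmn : m ≤ n) (hC : #C * (m - 1) ≤ n)
    (A : (Fin m × Fin n) ≃ Fin (m * n)) (R : ℕ) :
    ∃ L : List (Equiv.Perm (Fin m × Fin n)), (∀ g ∈ L, g ∈ unitRotations m n) ∧
      L.length ≤ R * (6 * n + #C * (2 * (m - 1))) ∧ RadixInvariant A (applySeq A L) C R := by
  induction R with
  | zero => exact ⟨[], by simp, by simp, .refl⟩
  | succ R ih =>
    obtain ⟨L, hL, hlen, hinv⟩ := ih
    refine ⟨L ++ passWord m C (bitsOf (applySeq A L) R), fun g hg => ?_, ?_, ?_⟩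
    · exact (List.mem_append.1 hg).elim (hL g) passWord_mem_unitRotations
    · rw [List.length_append, Nat.succ_mul]
      have := length_passWord (m := m) (C := C) (μ := bitsOf (applySeq A L) R)
      omega
    · rw [applySeq_append]
      exact hinv.pass hmn hC

lemma RadixInvariant.bodySorted {j : Fin n} (h : RadixInvariant A B C R) (hR : m ≤ 2 ^ R)
    (hA : BodyOfColumnIsFull A j) (hj : j ∈ C) : BodySorted B j := by
  have hbody (i : Fin m) (hi : 1 ≤ (i : ℕ)) :
      (B (i, j) : ℕ) % n = j ∧ 1 ≤ (B (i, j) : ℕ) / n := by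
    obtain ⟨i', hi', he⟩ := h.body j hj i hi
    rw [he]
    exact (hA _).1 ⟨i', hi', rfl⟩
  have hlt (p : Fin m × Fin n) : (B p : ℕ) / n < m :=
    Nat.div_lt_of_lt_mul ((B p).isLt.trans_eq (Nat.mul_comm m n))
  let key : {i : Fin m // 1 ≤ (i : ℕ)} → {i : Fin m // 1 ≤ (i : ℕ)} :=
    fun i => ⟨⟨(B (i.1, j) : ℕ) / n, hlt _⟩, (hbody i.1 i.2).2⟩
  have hmono : Monotone key := fun i i' hii' => by
    have := h.sorted j hj i.1 i'.1 i.2 hii'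
    rwa [Nat.mod_eq_of_lt ((hlt _).trans_le hR), Nat.mod_eq_of_lt ((hlt _).trans_le hR)] at this
  have hinj : Function.Injective key := fun i i' he => by
    have hdiv : (B (i.1, j) : ℕ) / n = (B (i'.1, j) : ℕ) / n := congrArg (fun k => (k.1 : ℕ)) he
    have hB : B (i.1, j) = B (i'.1, j) := Fin.ext <| by
      rw [← Nat.div_add_mod (B (i.1, j) : ℕ) n, ← Nat.div_add_mod (B (i'.1, j) : ℕ) n, hdiv,
        (hbody _ i.2).1, (hbody _ i'.2).1]
    exact Subtype.ext (congrArg Prod.fst (B.injective hB))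
  intro i hi
  have hkey : (B (i, j) : ℕ) / n = i :=
    congrArg (fun k => (k.1 : ℕ)) ((hmono.strictMono_of_injective hinj).apply_eq (x := ⟨i, hi⟩))
  rw [← Nat.div_add_mod (B (i, j) : ℕ) n, hkey, (hbody i hi).1, Nat.mul_comm]

end Radix

end TorusPuzzle

theorem radixSortBodies_bound :
    ∃ C : ℕ, 0 < C ∧ ∀ m n : ℕ, 2 ≤ m → m ≤ n →
      ∀ A : (Fin m × Fin n) ≃ Fin (m * n),
        (∀ j : Fin n, BodyOfColumnIsFull A j) →
        ∀ 𝒞 : Finset (Fin n), 𝒞.card * (m - 1) ≤ n →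
          ∃ L : List (Equiv.Perm (Fin m × Fin n)),
            (∀ g ∈ L, g ∈ unitRotations m n) ∧
            L.length ≤ C * (n + 𝒞.card * m) * Nat.clog 2 m ∧
            (∀ j ∈ 𝒞, BodySorted (applySeq A L) j) ∧
            (∀ j : Fin n, j ∉ 𝒞 → ∀ i : Fin m, 1 ≤ (i : ℕ) →
              (applySeq A L) (i, j) = A (i, j)) := by
  refine ⟨6, by norm_num, fun m n hm hmn A hA 𝒞 h𝒞 => ?_⟩
  have : NeZero m := ⟨by omega⟩
  have : NeZero n := ⟨by omega⟩
  obtain ⟨L, hL, hlen, hinv⟩ := TorusPuzzle.exists_radixWord hmn h𝒞 A (Nat.clog 2 m)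
  refine ⟨L, hL, hlen.trans ?_,
    fun j hj => hinv.bodySorted (Nat.le_pow_clog one_lt_two m) (hA j) hj, hinv.fixed⟩
  have hcols : 𝒞.card * (2 * (m - 1)) ≤ 6 * (𝒞.card * m) :=
    calc 𝒞.card * (2 * (m - 1)) ≤ 𝒞.card * (6 * m) := Nat.mul_le_mul_left _ (by omega)
      _ = 6 * (𝒞.card * m) := by ring
  rw [Nat.mul_comm (Nat.clog 2 m)]
  exact Nat.mul_le_mul_right _ (by omega)
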